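/- For the Abelian distribution with parameters N and p = α/N where 0 < α < 1, the variance satisfies lim_{N→∞} V(Z_{N,α/N}) = α/(1-α)^3. -/

import Mathlib

/-!
With `n = N - 1` and `b = k + 1 < N`, the terms `b P(b)` and `p b² P(b)` are `C_{N,p}` times
`C(n,k) (x + kz)^(k+e) (y - kz)^(n-1-k)` at `x = z = p`, `y = 1 - p`, with `e = 0` resp. `1`; the
term `b = N` is explicit. Abel's generalisation of the binomial theorem,
`∑ₖ C(n,k) (x + kz)^k (y - kz)^(n-k) = ∑ⱼ n⁽ʲ⁾ zʲ (x + y)^(n-j)` (falling factorials `n⁽ʲ⁾`),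
evaluates these sums: `E Z = 1 / (1 - (N-1)p)` and
`p E Z² = (1 - (1 - Np) ∑_{j<N} (N-1)⁽ʲ⁾ pʲ) / (1 - (N-1)p)`.

For `p = α/N` one has `(N-1)⁽ʲ⁾ (α/N)ʲ = αʲ ∏_{i<j} (1 - (i+1)/N)`, and the Bonferroni bounds
`1 - S ≤ ∏ (1 - xᵢ) ≤ 1 - S + S²` squeeze `N (1/(1-α) - ∑_{j<N} (N-1)⁽ʲ⁾ (α/N)ʲ)` towards
`∑ⱼ C(j+1,2) αʲ = α/(1-α)³`. Hence `E Z → 1/(1-α)`, `E Z² → 1/(1-α)³`, and the variance tends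
to `1/(1-α)³ - 1/(1-α)² = α/(1-α)³`.
-/

/-- Density of the Abelian distribution with parameters `N` and `p`,
evaluated at `b`. -/
noncomputable def abelianP (N : ℕ) (p : ℝ) (b : ℕ) : ℝ :=
  ((1 - N * p) / (1 - ((N : ℝ) - 1) * p)) * ((N - 1).choose (b - 1)) *
    p ^ (b - 1) * (1 - b * p) ^ ((N : ℤ) - b - 1) * (b : ℝ) ^ ((b : ℤ) - 2)

open Finset Filter Topology

section Abel

variable {R : Type*} [CommRing R]

/-- `∑_{k ≤ n} C(n,k) x (x + kz)^(k-1) (y - kz)^(n-k)`, with the term `k = 0` written as `y ^ n`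
so that no exponent `k - 1` is truncated. -/
def abelBinomialSum (n : ℕ) (x y z : R) : R :=
  y ^ n + ∑ j ∈ range n,
    (n.choose (j + 1) : R) * x * (x + (j + 1) * z) ^ j * (y - (j + 1) * z) ^ (n - 1 - j)

def abelSum (n : ℕ) (x y z : R) : R :=
  ∑ k ∈ range (n + 1), (n.choose k : R) * (x + k * z) ^ k * (y - k * z) ^ (n - k)

def descFactorialSum (n : ℕ) (s z : R) : R :=
  ∑ j ∈ range (n + 1), (n.descFactorial j : R) * z ^ j * s ^ (n - j)

theorem descFactorialSum_succ (n : ℕ) (s z : R) :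
    descFactorialSum (n + 1) s z = s ^ (n + 1) + ((n : R) + 1) * z * descFactorialSum n s z := by
  rw [descFactorialSum, sum_range_succ', descFactorialSum, mul_sum, add_comm]
  congr 1
  · simp
  · refine sum_congr rfl fun j _ => ?_
    rw [Nat.succ_descFactorial_succ, Nat.add_sub_add_right]
    push_cast
    ring

theorem abelSum_eq_pow_add_sum (n : ℕ) (x y z : R) :
    abelSum n x y z = y ^ n + ∑ j ∈ range n,
      (n.choose (j + 1) : R) * (x + (j + 1) * z) ^ (j + 1) * (y - (j + 1) * z) ^ (n - 1 - j) := by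
  rw [abelSum, sum_range_succ', add_comm]
  simp only [Nat.choose_zero_right, Nat.cast_zero, zero_mul, add_zero, pow_zero, sub_zero,
    Nat.cast_one, one_mul, Nat.sub_zero, Nat.cast_add]
  congr 1
  refine sum_congr rfl fun j _ => ?_
  rw [Nat.sub_sub, add_comm 1 j]

theorem abelSum_succ (n : ℕ) (x y z : R) :
    abelSum (n + 1) x y z
      = abelBinomialSum (n + 1) x y z + ((n : R) + 1) * z * abelSum n (x + z) (y - z) z := by
  rw [abelSum_eq_pow_add_sum, abelBinomialSum, abelSum, mul_sum, add_assoc, ← sum_add_distrib]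
  congr 1
  refine sum_congr rfl fun j hj => ?_
  have hc : ((n + 1).choose (j + 1) : R) * (j + 1) = (n + 1) * n.choose j := by
    simpa using congrArg (Nat.cast : ℕ → R) (Nat.add_one_mul_choose_eq n j).symm
  rw [show n + 1 - 1 - j = n - j by omega, pow_succ]
  linear_combination (x + (j + 1) * z) ^ j * (y - (j + 1) * z) ^ (n - j) * z * hc

theorem abelBinomialSum_succ (n : ℕ) (x y z : R) :
    abelBinomialSum (n + 1) x y z = y ^ (n + 1) + (x + y) * (abelBinomialSum n x y z - y ^ n)
      - x * (abelSum n x y z - y ^ n) + x * abelSum n (x + z) (y - z) z := by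
  have hsplit : ∀ j ∈ range (n + 1),
      ((n + 1).choose (j + 1) : R) * x * (x + (j + 1) * z) ^ j * (y - (j + 1) * z) ^ (n + 1 - 1 - j)
        = (n.choose (j + 1) : R) * x * (x + (j + 1) * z) ^ j * (y - (j + 1) * z) ^ (n - j)
          + x * ((n.choose j : R) * (x + z + j * z) ^ j * (y - z - j * z) ^ (n - j)) := by
    intro j _
    rw [Nat.choose_succ_succ', Nat.cast_add, show n + 1 - 1 - j = n - j by omega]
    ring
  have hdrop : ∀ j ∈ range n,
      (n.choose (j + 1) : R) * x * (x + (j + 1) * z) ^ j * (y - (j + 1) * z) ^ (n - j)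
        = (x + y) * ((n.choose (j + 1) : R) * x * (x + (j + 1) * z) ^ j
              * (y - (j + 1) * z) ^ (n - 1 - j))
          - x * ((n.choose (j + 1) : R) * (x + (j + 1) * z) ^ (j + 1)
              * (y - (j + 1) * z) ^ (n - 1 - j)) := by
    intro j hj
    rw [show n - j = n - 1 - j + 1 by have := mem_range.1 hj; omega]
    ring
  rw [abelBinomialSum, sum_congr rfl hsplit, sum_add_distrib, sum_range_succ,
    Nat.choose_succ_self, sum_congr rfl hdrop, sum_sub_distrib, ← mul_sum, ← mul_sum,
    ← mul_sum, abelSum_eq_pow_add_sum, abelBinomialSum, abelSum]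
  push_cast
  ring

theorem abelBinomialSum_eq_and_abelSum_eq (n : ℕ) (x y z : R) :
    abelBinomialSum n x y z = (x + y) ^ n ∧ abelSum n x y z = descFactorialSum n (x + y) z := by
  -- Each recurrence needs the other identity at `n`; the shift `(x, y) ↦ (x + z, y - z)` in them
  -- is harmless because `abelSum n` depends on `x + y` only.
  induction n generalizing x y with
  | zero => simp [abelBinomialSum, abelSum, descFactorialSum]
  | succ n ih =>
    have hshift : abelSum n (x + z) (y - z) z = descFactorialSum n (x + y) z := by
      rw [(ih _ _).2, show x + z + (y - z) = x + y by ring]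
    have hA : abelBinomialSum (n + 1) x y z = (x + y) ^ (n + 1) := by
      rw [abelBinomialSum_succ, (ih x y).1, (ih x y).2, hshift]
      ring
    refine ⟨hA, ?_⟩
    rw [abelSum_succ, hA, hshift, descFactorialSum_succ]

theorem abelSum_eq (n : ℕ) (x y z : R) : abelSum n x y z = descFactorialSum n (x + y) z :=
  (abelBinomialSum_eq_and_abelSum_eq n x y z).2

theorem sub_mul_sum_abel (n : ℕ) (x y z : R) :
    (y - n * z) * ∑ j ∈ range n, (n.choose j : R) * (x + j * z) ^ j * (y - j * z) ^ (n - 1 - j)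
      = (x + y) ^ n - (x + n * z) ^ n := by
  cases n with
  | zero => simp
  | succ n =>
    have hterm : ∀ j ∈ range (n + 1),
        ((n + 1).choose j : R) * (x + j * z) ^ j * (y - j * z) ^ (n + 1 - j)
          = (y - (n + 1 : ℕ) * z)
              * (((n + 1).choose j : R) * (x + j * z) ^ j * (y - j * z) ^ (n + 1 - 1 - j))
            + (n + 1) * z * ((n.choose j : R) * (x + j * z) ^ j * (y - j * z) ^ (n - j)) := by
      intro j hj
      have hjn : j ≤ n := Nat.lt_succ_iff.1 (mem_range.1 hj)
      have hc : (n.choose j : R) * (n + 1) = (n + 1).choose j * ((n + 1 : ℕ) - j : R) := by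
        rw [← Nat.cast_sub (by omega)]
        exact_mod_cast congrArg (Nat.cast : ℕ → R) (Nat.choose_mul_succ_eq n j)
      rw [show n + 1 - j = n - j + 1 by omega, show n + 1 - 1 - j = n - j by omega, pow_succ]
      push_cast at hc ⊢
      linear_combination -((x + j * z) ^ j * (y - j * z) ^ (n - j) * z) * hc
    have hB := abelSum_eq (n + 1) x y z
    rw [abelSum, sum_range_succ, sum_congr rfl hterm, sum_add_distrib, ← mul_sum, ← mul_sum,
      descFactorialSum_succ, ← abelSum, abelSum_eq, Nat.sub_self, pow_zero, mul_one,
      Nat.choose_self, Nat.cast_one, one_mul] at hB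
    linear_combination hB

theorem sub_mul_sum_abel_pow_succ (n : ℕ) (x y z : R) :
    (y - n * z)
        * ∑ j ∈ range n, (n.choose j : R) * (x + j * z) ^ (j + 1) * (y - j * z) ^ (n - 1 - j)
      = (x + y) * ((x + y) ^ n - (x + n * z) ^ n)
        - (y - n * z) * (descFactorialSum n (x + y) z - (x + n * z) ^ n) := by
  have hterm : ∀ j ∈ range n,
      (n.choose j : R) * (x + j * z) ^ (j + 1) * (y - j * z) ^ (n - 1 - j)
        = (x + y) * ((n.choose j : R) * (x + j * z) ^ j * (y - j * z) ^ (n - 1 - j))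
          - (n.choose j : R) * (x + j * z) ^ j * (y - j * z) ^ (n - j) := by
    intro j hj
    rw [show n - j = n - 1 - j + 1 by have := mem_range.1 hj; omega]
    ring
  have hB := abelSum_eq n x y z
  rw [abelSum, sum_range_succ, Nat.sub_self, pow_zero, mul_one, Nat.choose_self, Nat.cast_one,
    one_mul] at hB
  rw [sum_congr rfl hterm, sum_sub_distrib, ← mul_sum, mul_sub, mul_left_comm, sub_mul_sum_abel,
    ← hB]
  ring

end Abel

theorem sum_Icc_one_succ {M : Type*} [AddCommMonoid M] (n : ℕ) (f : ℕ → M) :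
    ∑ b ∈ Icc 1 (n + 1), f b = ∑ j ∈ range n, f (j + 1) + f (n + 1) := by
  rw [sum_Icc_succ_top (by omega), ← Ico_add_one_right_eq_Icc, sum_Ico_eq_sum_range]
  simp [add_comm]

theorem mul_abelianP_of_lt {n j : ℕ} (hj : j < n) (p : ℝ) :
    ((j : ℝ) + 1) * abelianP (n + 1) p (j + 1) = (1 - (n + 1) * p) / (1 - n * p) *
      ((n.choose j : ℝ) * (((j : ℝ) + 1) * p) ^ j
        * (1 - ((j : ℝ) + 1) * p) ^ (n - 1 - j)) := by
  have hexp : ((n + 1 : ℕ) : ℤ) - (j + 1 : ℕ) - 1 = ((n - 1 - j : ℕ) : ℤ) := by omega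
  have hb :
      ((j : ℝ) + 1) * ((j : ℝ) + 1) ^ (((j + 1 : ℕ) : ℤ) - 2) = ((j : ℝ) + 1) ^ j := by
    rw [← zpow_one_add₀ (by positivity),
      show (1 : ℤ) + (((j + 1 : ℕ) : ℤ) - 2) = j by omega, zpow_natCast]
  rw [abelianP, hexp, zpow_natCast, Nat.add_sub_cancel, Nat.add_sub_cancel, mul_pow]
  push_cast at hb ⊢
  linear_combination (1 - (n + 1) * p) / (1 - n * p) * n.choose j * p ^ j *
    (1 - ((j : ℝ) + 1) * p) ^ (n - 1 - j) * hb

theorem mul_abelianP_self (n : ℕ) {p : ℝ} (h : 1 - (n + 1) * p ≠ 0) :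
    ((n : ℝ) + 1) * abelianP (n + 1) p (n + 1) = (((n : ℝ) + 1) * p) ^ n / (1 - n * p) := by
  have hexp : ((n + 1 : ℕ) : ℤ) - (n + 1 : ℕ) - 1 = -1 := by omega
  have hb :
      ((n : ℝ) + 1) * ((n : ℝ) + 1) ^ (((n + 1 : ℕ) : ℤ) - 2) = ((n : ℝ) + 1) ^ n := by
    rw [← zpow_one_add₀ (by positivity),
      show (1 : ℤ) + (((n + 1 : ℕ) : ℤ) - 2) = n by omega, zpow_natCast]
  rw [abelianP, hexp, zpow_neg_one, Nat.add_sub_cancel, Nat.choose_self, mul_pow]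
  have hC : (1 - (n + 1) * p) / (1 - n * p) * (1 - (n + 1) * p)⁻¹ = (1 - n * p)⁻¹ := by
    rw [div_mul_eq_mul_div, mul_inv_cancel₀ h, one_div]
  push_cast at hb ⊢
  rw [add_sub_cancel_right]
  linear_combination (p ^ n * ((1 - (n + 1) * p) / (1 - n * p) * (1 - (n + 1) * p)⁻¹)) * hb
    + (((n : ℝ) + 1) ^ n * p ^ n) * hC

theorem sum_mul_abelianP {N : ℕ} (hN : 0 < N) {p : ℝ} (h : 1 - N * p ≠ 0) :
    ∑ b ∈ Icc 1 N, (b : ℝ) * abelianP N p b = 1 / (1 - (N - 1) * p) := by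
  obtain ⟨n, rfl⟩ : ∃ n, N = n + 1 := ⟨N - 1, by omega⟩
  push_cast at h ⊢
  have hD : (1 - (n + 1) * p) * ∑ j ∈ range n,
      (n.choose j : ℝ) * (((j : ℝ) + 1) * p) ^ j * (1 - ((j : ℝ) + 1) * p) ^ (n - 1 - j)
        = 1 - (((n : ℝ) + 1) * p) ^ n := by
    calc _ = (1 - p - n * p) * ∑ j ∈ range n,
          (n.choose j : ℝ) * (p + j * p) ^ j * (1 - p - j * p) ^ (n - 1 - j) := by
          congr 1
          · ring
          · exact sum_congr rfl fun j _ => by ring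
      _ = _ := by rw [sub_mul_sum_abel]; ring
  rw [sum_Icc_one_succ]
  push_cast
  rw [sum_congr rfl fun j hj => mul_abelianP_of_lt (mem_range.1 hj) p, ← mul_sum,
    mul_abelianP_self n h, div_mul_eq_mul_div, hD, ← add_div, sub_add_cancel,
    add_sub_cancel_right]

theorem mul_sum_sq_mul_abelianP {N : ℕ} (hN : 0 < N) {p : ℝ} (h : 1 - N * p ≠ 0) :
    p * ∑ b ∈ Icc 1 N, (b : ℝ) ^ 2 * abelianP N p b
      = (1 - (1 - N * p) * ∑ j ∈ range N, ((N - 1).descFactorial j : ℝ) * p ^ j)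
          / (1 - (N - 1) * p) := by
  obtain ⟨n, rfl⟩ : ∃ n, N = n + 1 := ⟨N - 1, by omega⟩
  push_cast at h ⊢
  have hW : (1 - (n + 1) * p) * ∑ j ∈ range n,
      (n.choose j : ℝ) * (((j : ℝ) + 1) * p) ^ (j + 1) * (1 - ((j : ℝ) + 1) * p) ^ (n - 1 - j)
        = 1 - (((n : ℝ) + 1) * p) ^ n - (1 - (n + 1) * p)
            * (∑ j ∈ range (n + 1), (n.descFactorial j : ℝ) * p ^ j
                - (((n : ℝ) + 1) * p) ^ n) := by
    calc _ = (1 - p - n * p) * ∑ j ∈ range n,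
          (n.choose j : ℝ) * (p + j * p) ^ (j + 1) * (1 - p - j * p) ^ (n - 1 - j) := by
          congr 1
          · ring
          · exact sum_congr rfl fun j _ => by ring
      _ = _ := by
          rw [sub_mul_sum_abel_pow_succ, descFactorialSum]
          simp only [add_sub_cancel, one_pow, mul_one]
          ring
  have hsplit : ∀ b : ℕ,
      p * ((b : ℝ) ^ 2 * abelianP (n + 1) p b) = b * p * (b * abelianP (n + 1) p b) :=
    fun b => by ring
  rw [mul_sum, sum_congr rfl fun b _ => hsplit b, sum_Icc_one_succ]
  push_cast
  have hterm : ∀ j ∈ range n,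
      ((j : ℝ) + 1) * p * (((j : ℝ) + 1) * abelianP (n + 1) p (j + 1))
      = (1 - (n + 1) * p) / (1 - n * p) * ((n.choose j : ℝ) * (((j : ℝ) + 1) * p) ^ (j + 1)
          * (1 - ((j : ℝ) + 1) * p) ^ (n - 1 - j)) := fun j hj => by
    rw [mul_abelianP_of_lt (mem_range.1 hj) p]
    ring
  rw [sum_congr rfl hterm, ← mul_sum, mul_abelianP_self n h, div_mul_eq_mul_div, hW,
    mul_div_assoc', ← add_div, add_sub_cancel_right]
  ring

section Bonferroni

variable {ι R : Type*} [CommRing R] [LinearOrder R] [IsStrictOrderedRing R] (s : Finset ι)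
  {x : ι → R}

theorem one_sub_sum_le_prod_one_sub (h0 : ∀ i ∈ s, 0 ≤ x i) (h1 : ∀ i ∈ s, x i ≤ 1) :
    1 - ∑ i ∈ s, x i ≤ ∏ i ∈ s, (1 - x i) := by
  induction s using Finset.cons_induction with
  | empty => simp
  | cons a s ha ih =>
    rw [prod_cons, sum_cons]
    have ihs := ih (fun i hi => h0 i (mem_cons_of_mem hi)) (fun i hi => h1 i (mem_cons_of_mem hi))
    have hs : 0 ≤ ∑ i ∈ s, x i := sum_nonneg fun i hi => h0 i (mem_cons_of_mem hi)
    nlinarith [h0 a (mem_cons_self a s), h1 a (mem_cons_self a s)]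

theorem prod_one_sub_le_one_sub_sum_add_sq (h0 : ∀ i ∈ s, 0 ≤ x i)
    (h1 : ∀ i ∈ s, x i ≤ 1) : ∏ i ∈ s, (1 - x i) ≤ 1 - ∑ i ∈ s, x i + (∑ i ∈ s, x i) ^ 2 := by
  induction s using Finset.cons_induction with
  | empty => simp
  | cons a s ha ih =>
    rw [prod_cons, sum_cons]
    have ihs := ih (fun i hi => h0 i (mem_cons_of_mem hi)) (fun i hi => h1 i (mem_cons_of_mem hi))
    have hs : 0 ≤ ∑ i ∈ s, x i := sum_nonneg fun i hi => h0 i (mem_cons_of_mem hi)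
    nlinarith [h0 a (mem_cons_self a s), h1 a (mem_cons_self a s)]

end Bonferroni

theorem sum_range_add_one_eq_choose_two (j : ℕ) :
    ∑ i ∈ range j, ((i : ℝ) + 1) = ((j + 1).choose 2 : ℝ) := by
  induction j with
  | zero => simp
  | succ j ih =>
    rw [sum_range_succ, ih, Nat.choose_succ_succ' (j + 1) 1, Nat.choose_one_right]
    push_cast
    ring

theorem natCast_mul_one_sub_prod_mem_Icc {N j : ℕ} (hj : j ≤ N) :
    (N : ℝ) * (1 - ∏ i ∈ range j, (1 - ((i : ℝ) + 1) / N)) ∈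
      Set.Icc (((j + 1).choose 2 : ℝ) - ((j + 1).choose 2 : ℝ) ^ 2 / N) ((j + 1).choose 2) := by
  rcases Nat.eq_zero_or_pos N with rfl | hN
  · obtain rfl : j = 0 := by omega
    simp
  have hNr : (0 : ℝ) < N := by exact_mod_cast hN
  have hsum : ∑ i ∈ range j, ((i : ℝ) + 1) / N = ((j + 1).choose 2 : ℝ) / N := by
    rw [← sum_div, sum_range_add_one_eq_choose_two]
  have h0 : ∀ i ∈ range j, (0 : ℝ) ≤ ((i : ℝ) + 1) / N := fun i _ => by positivity
  have h1 : ∀ i ∈ range j, ((i : ℝ) + 1) / N ≤ 1 := fun i hi => by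
    rw [div_le_one hNr]
    exact_mod_cast (mem_range.1 hi).trans_le hj
  have hlo := one_sub_sum_le_prod_one_sub _ h0 h1
  have hhi := prod_one_sub_le_one_sub_sum_add_sq _ h0 h1
  rw [hsum] at hlo hhi
  constructor
  · calc ((j + 1).choose 2 : ℝ) - ((j + 1).choose 2 : ℝ) ^ 2 / N
        = N * (((j + 1).choose 2 : ℝ) / N - (((j + 1).choose 2 : ℝ) / N) ^ 2) := by
          field_simp
      _ ≤ _ := mul_le_mul_of_nonneg_left (by linarith) hNr.le
  · calc (N : ℝ) * (1 - ∏ i ∈ range j, (1 - ((i : ℝ) + 1) / N))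
        ≤ N * (((j + 1).choose 2 : ℝ) / N) := mul_le_mul_of_nonneg_left (by linarith) hNr.le
      _ = _ := by field_simp

theorem descFactorial_mul_div_pow_eq_pow_mul_prod {N j : ℕ} (hj : j ≤ N) (α : ℝ) :
    ((N - 1).descFactorial j : ℝ) * (α / N) ^ j
      = α ^ j * ∏ i ∈ range j, (1 - ((i : ℝ) + 1) / N) := by
  rcases Nat.eq_zero_or_pos N with rfl | hN
  · obtain rfl : j = 0 := by omega
    simp
  have hNr : (N : ℝ) ≠ 0 := by positivity
  rw [Nat.descFactorial_eq_prod_range, Nat.cast_prod, ← card_range j, ← prod_const,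
    ← prod_const, card_range, ← prod_mul_distrib, ← prod_mul_distrib]
  refine prod_congr rfl fun i hi => ?_
  rw [Nat.sub_sub, Nat.cast_sub (by have := mem_range.1 hi; omega)]
  push_cast
  field_simp
  ring

theorem hasSum_pow_mul_choose_two {α : ℝ} (hα : |α| < 1) :
    HasSum (fun j : ℕ => α ^ j * ((j + 1).choose 2 : ℝ)) (α / (1 - α) ^ 3) := by
  have h :=
    (hasSum_choose_mul_geometric_of_norm_lt_one 2 (r := α) (by simpa using hα)).mul_left α
  have hf : (fun n : ℕ => α ^ (n + 1) * ((n + 1 + 1).choose 2 : ℝ))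
      = fun n => α * (((n + 2).choose 2 : ℝ) * α ^ n) := by
    funext n
    ring
  have hv : α / (1 - α) ^ 3 - ∑ i ∈ range 1, α ^ i * ((i + 1).choose 2 : ℝ)
      = α * (1 / (1 - α) ^ (2 + 1)) := by
    simp
    ring
  rwa [← hasSum_nat_add_iff' 1, hf, hv]

theorem summable_pow_mul_choose_two_sq {α : ℝ} (hα : |α| < 1) :
    Summable (fun j : ℕ => α ^ j * ((j + 1).choose 2 : ℝ) ^ 2) := by
  refine Summable.of_norm_bounded
    (summable_pow_mul_geometric_of_norm_lt_one 4 (r := |α|) (by simpa using hα)) fun j => ?_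
  have hT : ((j + 1).choose 2 : ℝ) ≤ (j : ℝ) ^ 2 := by
    calc ((j + 1).choose 2 : ℝ) = ∑ i ∈ range j, ((i : ℝ) + 1) :=
          (sum_range_add_one_eq_choose_two j).symm
      _ ≤ ∑ _i ∈ range j, (j : ℝ) := sum_le_sum fun i hi => by exact_mod_cast mem_range.1 hi
      _ = (j : ℝ) ^ 2 := by rw [sum_const, card_range, nsmul_eq_mul, sq]
  rw [norm_mul, norm_pow, Real.norm_eq_abs, norm_pow, Real.norm_eq_abs, mul_comm]
  gcongr
  calc |((j + 1).choose 2 : ℝ)| ^ 2 = ((j + 1).choose 2 : ℝ) ^ 2 := by simp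
    _ ≤ ((j : ℝ) ^ 2) ^ 2 := by gcongr
    _ = (j : ℝ) ^ 4 := by ring

theorem tendsto_sum_pow_mul_natCast_mul_one_sub_prod {α : ℝ} (hα0 : 0 ≤ α) (hα1 : α < 1) :
    Tendsto (fun N : ℕ => ∑ j ∈ range N,
        α ^ j * (N * (1 - ∏ i ∈ range j, (1 - ((i : ℝ) + 1) / N))))
      atTop (𝓝 (α / (1 - α) ^ 3)) := by
  have hα : |α| < 1 := by rwa [abs_of_nonneg hα0]
  have hT := (hasSum_pow_mul_choose_two hα).tendsto_sum_nat
  set K := ∑' j : ℕ, α ^ j * ((j + 1).choose 2 : ℝ) ^ 2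
  have hK : ∀ N, ∑ j ∈ range N, α ^ j * ((j + 1).choose 2 : ℝ) ^ 2 ≤ K := fun N =>
    (summable_pow_mul_choose_two_sq hα).sum_le_tsum _ fun j _ => by positivity
  have hlower := hT.sub (tendsto_const_div_atTop_nhds_zero_nat K)
  rw [sub_zero] at hlower
  refine tendsto_of_tendsto_of_tendsto_of_le_of_le' hlower hT ?_ (Eventually.of_forall fun N => ?_)
  · filter_upwards [eventually_gt_atTop 0] with N hN
    have hNr : (0 : ℝ) < N := by exact_mod_cast hN
    calc ∑ j ∈ range N, α ^ j * ((j + 1).choose 2 : ℝ) - K / N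
        ≤ ∑ j ∈ range N, α ^ j * ((j + 1).choose 2 : ℝ)
            - (∑ j ∈ range N, α ^ j * ((j + 1).choose 2 : ℝ) ^ 2) / N := by
          gcongr
          exact hK N
      _ = ∑ j ∈ range N,
            α ^ j * (((j + 1).choose 2 : ℝ) - ((j + 1).choose 2 : ℝ) ^ 2 / N) := by
          rw [sum_div, ← sum_sub_distrib]
          exact sum_congr rfl fun j _ => by ring
      _ ≤ _ := sum_le_sum fun j hj => mul_le_mul_of_nonneg_left
          (natCast_mul_one_sub_prod_mem_Icc (mem_range.1 hj).le).1 (pow_nonneg hα0 j)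
  · exact sum_le_sum fun j hj => mul_le_mul_of_nonneg_left
      (natCast_mul_one_sub_prod_mem_Icc (mem_range.1 hj).le).2 (pow_nonneg hα0 j)

theorem natCast_mul_sub_sum_descFactorial_eq (N : ℕ) {α : ℝ} (hα : α ≠ 1) :
    (N : ℝ) * (1 / (1 - α) - ∑ j ∈ range N, ((N - 1).descFactorial j : ℝ) * (α / N) ^ j)
      = ∑ j ∈ range N, α ^ j * (N * (1 - ∏ i ∈ range j, (1 - ((i : ℝ) + 1) / N)))
        + N * α ^ N / (1 - α) := by
  have hα' : 1 - α ≠ 0 := sub_ne_zero.2 hα.symm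
  have hα'' : α - 1 ≠ 0 := sub_ne_zero.2 hα
  rw [sum_congr rfl fun j hj => descFactorial_mul_div_pow_eq_pow_mul_prod (mem_range.1 hj).le α]
  have hsplit : ∑ j ∈ range N, α ^ j * (N * (1 - ∏ i ∈ range j, (1 - ((i : ℝ) + 1) / N)))
      = N * ∑ j ∈ range N, α ^ j
          - N * ∑ j ∈ range N, α ^ j * ∏ i ∈ range j, (1 - ((i : ℝ) + 1) / N) := by
    rw [mul_sum, mul_sum, ← sum_sub_distrib]
    exact sum_congr rfl fun j _ => by ring
  rw [hsplit, geom_sum_eq hα]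
  field_simp
  ring

theorem tendsto_natCast_mul_sub_sum_descFactorial {α : ℝ} (hα0 : 0 ≤ α) (hα1 : α < 1) :
    Tendsto (fun N : ℕ =>
        (N : ℝ) * (1 / (1 - α)
          - ∑ j ∈ range N, ((N - 1).descFactorial j : ℝ) * (α / N) ^ j))
      atTop (𝓝 (α / (1 - α) ^ 3)) := by
  have htail : Tendsto (fun N : ℕ => N * α ^ N / (1 - α)) atTop (𝓝 0) := by
    simpa using (tendsto_self_mul_const_pow_of_lt_one hα0 hα1).div_const (1 - α)
  have h := (tendsto_sum_pow_mul_natCast_mul_one_sub_prod hα0 hα1).add htail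
  rw [add_zero] at h
  exact h.congr fun N => (natCast_mul_sub_sum_descFactorial_eq N hα1.ne).symm

theorem tendsto_one_sub_natCast_sub_one_mul_div (α : ℝ) :
    Tendsto (fun N : ℕ => 1 - ((N : ℝ) - 1) * (α / N)) atTop (𝓝 (1 - α)) := by
  have h := (tendsto_const_div_atTop_nhds_zero_nat α).const_add (1 - α)
  rw [add_zero] at h
  refine h.congr' ?_
  filter_upwards [eventually_gt_atTop 0] with N hN
  have hN' : (N : ℝ) ≠ 0 := by positivity
  field_simp
  ring

theorem tendsto_sum_mul_abelianP {α : ℝ} (hα : α < 1) :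
    Tendsto (fun N : ℕ => ∑ b ∈ Icc 1 N, (b : ℝ) * abelianP N (α / N) b)
      atTop (𝓝 (1 / (1 - α))) := by
  have hα' : 1 - α ≠ 0 := sub_ne_zero.2 hα.ne'
  refine (tendsto_const_nhds.div (tendsto_one_sub_natCast_sub_one_mul_div α) hα').congr' ?_
  filter_upwards [eventually_gt_atTop 0] with N hN
  have hNα : (N : ℝ) * (α / N) = α := mul_div_cancel₀ α (by positivity)
  rw [Pi.div_apply, sum_mul_abelianP hN (by rwa [hNα])]

theorem tendsto_sum_sq_mul_abelianP {α : ℝ} (hα0 : 0 < α) (hα1 : α < 1) :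
    Tendsto (fun N : ℕ => ∑ b ∈ Icc 1 N, (b : ℝ) ^ 2 * abelianP N (α / N) b)
      atTop (𝓝 (1 / (1 - α) ^ 3)) := by
  have hα1' : 1 - α ≠ 0 := sub_ne_zero.2 hα1.ne'
  have h := ((tendsto_natCast_mul_sub_sum_descFactorial hα0.le hα1).const_mul ((1 - α) / α)).div
    (tendsto_one_sub_natCast_sub_one_mul_div α) hα1'
  rw [show (1 - α) / α * (α / (1 - α) ^ 3) / (1 - α) = 1 / (1 - α) ^ 3 by field_simp] at h
  refine h.congr' ?_
  filter_upwards [eventually_gt_atTop 0] with N hN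
  have hN' : (N : ℝ) ≠ 0 := by positivity
  have hNα : (N : ℝ) * (α / N) = α := mul_div_cancel₀ α hN'
  have h2 := mul_sum_sq_mul_abelianP hN (p := α / N) (by rw [hNα]; exact hα1')
  rw [hNα, mul_comm] at h2
  rw [Pi.div_apply, eq_div_of_mul_eq (by positivity) h2]
  field_simp

theorem tendsto_abelian_variance (α : ℝ) (hα : 0 < α) (hα' : α < 1) :
    Filter.Tendsto
      (fun N : ℕ =>
        (∑ b ∈ Finset.Icc 1 N, (b : ℝ) ^ 2 * abelianP N (α / N) b)
          - (∑ b ∈ Finset.Icc 1 N, (b : ℝ) * abelianP N (α / N) b) ^ 2)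
      Filter.atTop (nhds (α / (1 - α) ^ 3)) := by
  have h := (tendsto_sum_sq_mul_abelianP hα hα').sub ((tendsto_sum_mul_abelianP hα').pow 2)
  have hα1 : 1 - α ≠ 0 := sub_ne_zero.2 hα'.ne'
  rwa [show 1 / (1 - α) ^ 3 - (1 / (1 - α)) ^ 2 = α / (1 - α) ^ 3 by field_simp; ring] at h
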